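/- Let g be the pseudo-Riemannian metric on ℝ⁶ given by g = 2du₁⊗du₄ + 2du₂⊗du₅ + 2du₃⊗du₆ − 2u₁u₃u₅ du₁⊗du₁ − 2(u₁+u₃)u₅ du₃⊗du₃. Then g is not locally symmetric: the covariant derivative of its curvature tensor satisfies g((∇_{∂₁}R)(∂₁,∂₃)∂₅, ∂₁) = 1 at every point, so ∇R ≠ 0. -/

import Mathlib

/-!
Indices are 0-based, as in Lean. The Christoffel symbols `Γᶜₐᵦ` of `gSix` vanish unless `c` is
odd and `a, b` are even, and they depend only on the even coordinates. Hence every product of two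
Christoffel symbols, and of a Christoffel symbol with a curvature component, vanishes, leaving
`Rˡᵢⱼₖ = ∂ᵢΓˡⱼₖ − ∂ⱼΓˡᵢₖ` and `(∇ₕR)ˡᵢⱼₖ = ∂ₕ∂ᵢΓˡⱼₖ − ∂ₕ∂ⱼΓˡᵢₖ`. Since `Γ³₂₄ = 0` and
`Γ³₀₄ = −u₀u₂`, this gives `(∇₀R)³₀₂₄ = 1`, while `(∇₀R)⁰₀₂₄ = 0` because `Γ⁰ = 0`; so lowering
the index with `g(·, ∂₀)` picks out `g₃₀ = 1`.
-/

open scoped BigOperators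

noncomputable section

variable {ι : Type} [Fintype ι] [DecidableEq ι]

/-- Partial derivative in the `i`-th coordinate direction. -/
def pd (i : ι) (f : (ι → ℝ) → ℝ) : (ι → ℝ) → ℝ :=
  fun p => fderiv ℝ f p (Pi.single i 1)

/-- Curvature components `R^l_{ijk}` of the torsion-free connection with Christoffel
symbols `Γ k i j = Γᵏᵢⱼ`:
`Rˡᵢⱼₖ = ∂ᵢΓˡⱼₖ − ∂ⱼΓˡᵢₖ + Σₘ (Γˡᵢₘ Γᵐⱼₖ − Γˡⱼₘ Γᵐᵢₖ)`. -/
def curv (Γ : ι → ι → ι → (ι → ℝ) → ℝ) (l i j k : ι) : (ι → ℝ) → ℝ :=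
  fun p => pd i (Γ l j k) p - pd j (Γ l i k) p +
    ∑ m, (Γ l i m p * Γ m j k p - Γ l j m p * Γ m i k p)

/-- Components `(∇ₕR)ˡᵢⱼₖ` of the covariant derivative of the curvature. -/
def covR (Γ : ι → ι → ι → (ι → ℝ) → ℝ) (h l i j k : ι) : (ι → ℝ) → ℝ :=
  fun p => pd h (curv Γ l i j k) p +
    ∑ m, (Γ l h m p * curv Γ m i j k p - Γ m h i p * curv Γ l m j k p
      - Γ m h j p * curv Γ l i m k p - Γ m h k p * curv Γ l i j m p)

/-- The Szabó operator `S(X) : Y ↦ (∇_X R)(Y,X)X` at the point `p`, as a matrix: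
`(S(X)Y)ˡ = Σ_{h,i,j,k} Xʰ Yⁱ Xʲ Xᵏ (∇ₕR)ˡᵢⱼₖ`. -/
def szabo (Γ : ι → ι → ι → (ι → ℝ) → ℝ) (p X : ι → ℝ) : Matrix ι ι ℝ :=
  Matrix.of fun l i => ∑ h, ∑ j, ∑ k, X h * X j * X k * covR Γ h l i j k p

/-- Ricci tensor `Ricⱼₖ = Σᵢ Rⁱᵢⱼₖ`. -/
def ricci (Γ : ι → ι → ι → (ι → ℝ) → ℝ) (j k : ι) : (ι → ℝ) → ℝ :=
  fun p => ∑ i, curv Γ i i j k p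

/-- Covariant derivative of the Ricci tensor,
`(∇ᵢRic)ⱼₖ = ∂ᵢRicⱼₖ − Σₘ (Γᵐᵢⱼ Ricₘₖ + Γᵐᵢₖ Ricⱼₘ)`. -/
def covRic (Γ : ι → ι → ι → (ι → ℝ) → ℝ) (i j k : ι) : (ι → ℝ) → ℝ :=
  fun p => pd i (ricci Γ j k) p -
    ∑ m, (Γ m i j p * ricci Γ m k p + Γ m i k p * ricci Γ j m p)

/-- The Ricci tensor is cyclic parallel at `p`. -/
def CyclicParallelAt (Γ : ι → ι → ι → (ι → ℝ) → ℝ) (p : ι → ℝ) : Prop :=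
  ∀ i j k, covRic Γ i j k p + covRic Γ j k i p + covRic Γ k i j p = 0

/-- Christoffel symbols `Γ̃ᶜₐᵦ = ½ Σ_d g̃ᶜᵈ (∂ₐ g̃ᵦ_d + ∂ᵦ g̃ₐ_d − ∂_d g̃ₐᵦ)` of the
Levi-Civita connection of a pseudo-Riemannian metric `g`. -/
def christoffel (g : (ι → ℝ) → Matrix ι ι ℝ) (c a b : ι) : (ι → ℝ) → ℝ :=
  fun p => (1 / 2) * ∑ d, (g p)⁻¹ c d *
    (pd a (fun q => g q b d) p + pd b (fun q => g q a d) p - pd d (fun q => g q a b) p)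

end

/-- The pseudo-Riemannian metric on `ℝ⁶`:
`g = 2du₁⊗du₄ + 2du₂⊗du₅ + 2du₃⊗du₆ − 2u₁u₃u₅ du₁⊗du₁ − 2(u₁+u₃)u₅ du₃⊗du₃`. -/
def gSix : (Fin 6 → ℝ) → Matrix (Fin 6) (Fin 6) ℝ :=
  fun u =>
    !![-2 * u 0 * u 2 * u 4, 0, 0, 1, 0, 0;
       0, 0, 0, 0, 1, 0;
       0, 0, -2 * (u 0 + u 2) * u 4, 0, 0, 1;
       1, 0, 0, 0, 0, 0;
       0, 1, 0, 0, 0, 0;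
       0, 0, 1, 0, 0, 0]

section PartialDerivatives

variable {ι : Type} [DecidableEq ι] {f g : (ι → ℝ) → ℝ} {p : ι → ℝ}

@[simp]
theorem pd_const (i : ι) (c : ℝ) : pd i (fun _ => c) p = 0 := by
  simp [pd]

@[simp]
theorem pd_zero (i : ι) : pd i 0 p = 0 :=
  pd_const i 0

@[simp]
theorem pd_apply (i j : ι) :
    pd i (fun q => q j) p = if i = j then 1 else 0 := by
  rw [pd, (hasFDerivAt_apply j p).fderiv]
  simp [Pi.single_apply, eq_comm]

@[simp]
theorem pd_neg [Fintype ι] (i : ι) : pd i (fun q => -f q) p = -pd i f p := by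
  simp [pd, fderiv_fun_neg]

theorem pd_add [Fintype ι] (i : ι) (hf : DifferentiableAt ℝ f p) (hg : DifferentiableAt ℝ g p) :
    pd i (fun q => f q + g q) p = pd i f p + pd i g p := by
  simp [pd, fderiv_fun_add hf hg]

theorem pd_mul [Fintype ι] (i : ι) (hf : DifferentiableAt ℝ f p) (hg : DifferentiableAt ℝ g p) :
    pd i (fun q => f q * g q) p = pd i f p * g p + f p * pd i g p := by
  simp [pd, fderiv_fun_mul hf hg]
  ring

theorem pd_eq_zero_of_update [Fintype ι] (i : ι)
    (hupdate : ∀ q t, f (Function.update q i t) = f q) :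
    pd i f p = 0 := by
  by_cases hdiff : DifferentiableAt ℝ f p
  · have hline : (fun t : ℝ => f (p + t • Pi.single i 1)) = fun _ => f p := by
      funext t
      rw [← hupdate p (p i + t)]
      congr 1
      ext j
      rcases eq_or_ne j i with rfl | hj <;> simp [Function.update_of_ne, *]
    rw [pd, ← hdiff.lineDeriv_eq_fderiv, lineDeriv, hline, deriv_const]
  · simp [pd, fderiv_zero_of_not_differentiableAt hdiff]

end PartialDerivatives

structure SquareZeroAlong {ι : Type} [DecidableEq ι] (S : Set ι)
    (Γ : ι → ι → ι → (ι → ℝ) → ℝ) : Prop where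
  eq_zero_of_notMem_upper : ∀ c ∉ S, ∀ a b, Γ c a b = 0
  eq_zero_of_mem_left : ∀ a ∈ S, ∀ c b, Γ c a b = 0
  eq_zero_of_mem_right : ∀ b ∈ S, ∀ c a, Γ c a b = 0
  pd_eq_zero : ∀ m ∈ S, ∀ c a b, pd m (Γ c a b) = 0

namespace SquareZeroAlong

variable {ι : Type} [Fintype ι] [DecidableEq ι] {S : Set ι} {Γ : ι → ι → ι → (ι → ℝ) → ℝ}

theorem curv_eq (hΓ : SquareZeroAlong S Γ) (l i j k : ι) :
    curv Γ l i j k = fun p => pd i (Γ l j k) p - pd j (Γ l i k) p := by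
  funext p
  have hquad : ∀ a b m, Γ l a m p * Γ m b k p = 0 := by
    intro a b m
    by_cases hm : m ∈ S
    · simp [hΓ.eq_zero_of_mem_right m hm]
    · simp [hΓ.eq_zero_of_notMem_upper m hm]
  simp [curv, hquad]

theorem curv_eq_zero_of_notMem (hΓ : SquareZeroAlong S Γ) {l : ι} (hl : l ∉ S) (i j k : ι) :
    curv Γ l i j k = 0 := by
  funext p
  simp [hΓ.curv_eq, hΓ.eq_zero_of_notMem_upper l hl]

theorem curv_eq_zero_of_mem_fst (hΓ : SquareZeroAlong S Γ) {i : ι} (hi : i ∈ S) (l j k : ι) :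
    curv Γ l i j k = 0 := by
  funext p
  simp [hΓ.curv_eq, hΓ.pd_eq_zero i hi, hΓ.eq_zero_of_mem_left i hi]

theorem curv_eq_zero_of_mem_snd (hΓ : SquareZeroAlong S Γ) {j : ι} (hj : j ∈ S) (l i k : ι) :
    curv Γ l i j k = 0 := by
  funext p
  simp [hΓ.curv_eq, hΓ.pd_eq_zero j hj, hΓ.eq_zero_of_mem_left j hj]

theorem curv_eq_zero_of_mem_thd (hΓ : SquareZeroAlong S Γ) {k : ι} (hk : k ∈ S) (l i j : ι) :
    curv Γ l i j k = 0 := by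
  funext p
  simp [hΓ.curv_eq, hΓ.eq_zero_of_mem_right k hk]

theorem covR_eq (hΓ : SquareZeroAlong S Γ) (h l i j k : ι) (p : ι → ℝ) :
    covR Γ h l i j k p = pd h (fun q => pd i (Γ l j k) q - pd j (Γ l i k) q) p := by
  have hterm : ∀ m, Γ l h m p * curv Γ m i j k p - Γ m h i p * curv Γ l m j k p
      - Γ m h j p * curv Γ l i m k p - Γ m h k p * curv Γ l i j m p = 0 := by
    intro m
    by_cases hm : m ∈ S
    · simp [hΓ.eq_zero_of_mem_right m hm, hΓ.curv_eq_zero_of_mem_fst hm,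
        hΓ.curv_eq_zero_of_mem_snd hm, hΓ.curv_eq_zero_of_mem_thd hm]
    · simp [hΓ.curv_eq_zero_of_notMem hm, hΓ.eq_zero_of_notMem_upper m hm]
  rw [covR, Finset.sum_eq_zero fun m _ => hterm m, add_zero, hΓ.curv_eq]

end SquareZeroAlong

-- `gSix` has the block form `[[D, 1], [1, 0]]` with `D` diagonal, whose inverse is `[[0, 1], [1, -D]]`.
def gSixInv (u : Fin 6 → ℝ) : Matrix (Fin 6) (Fin 6) ℝ :=
  !![0, 0, 0, 1, 0, 0;
     0, 0, 0, 0, 1, 0;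
     0, 0, 0, 0, 0, 1;
     1, 0, 0, 2 * u 0 * u 2 * u 4, 0, 0;
     0, 1, 0, 0, 0, 0;
     0, 0, 1, 0, 0, 2 * (u 0 + u 2) * u 4]

theorem inv_gSix (u : Fin 6 → ℝ) : (gSix u)⁻¹ = gSixInv u := by
  refine Matrix.inv_eq_left_inv ?_
  ext i j
  fin_cases i <;> fin_cases j <;> simp [gSix, gSixInv, Matrix.mul_apply, Fin.sum_univ_six]

def christoffelSix (c a b : Fin 6) : (Fin 6 → ℝ) → ℝ := fun u =>
  if c = 1 then
    if a = 0 ∧ b = 0 then u 0 * u 2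
    else if a = 2 ∧ b = 2 then u 0 + u 2
    else 0
  else if c = 3 then
    if a = 0 ∧ b = 0 then -(u 2 * u 4)
    else if a = 0 ∧ b = 2 ∨ a = 2 ∧ b = 0 then -(u 0 * u 4)
    else if a = 0 ∧ b = 4 ∨ a = 4 ∧ b = 0 then -(u 0 * u 2)
    else if a = 2 ∧ b = 2 then u 4
    else 0
  else if c = 5 then
    if a = 0 ∧ b = 0 then u 0 * u 4
    else if a = 0 ∧ b = 2 ∨ a = 2 ∧ b = 0 then -u 4
    else if a = 2 ∧ b = 2 then -u 4
    else if a = 2 ∧ b = 4 ∨ a = 4 ∧ b = 2 then -(u 0 + u 2)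
    else 0
  else 0

theorem pd_gSix (a b d : Fin 6) (p : Fin 6 → ℝ) :
    pd a (fun q => gSix q b d) p =
      if b = 0 ∧ d = 0 then
        if a = 0 then -2 * p 2 * p 4 else if a = 2 then -2 * p 0 * p 4
        else if a = 4 then -2 * p 0 * p 2 else 0
      else if b = 2 ∧ d = 2 then
        if a = 0 ∨ a = 2 then -2 * p 4 else if a = 4 then -2 * (p 0 + p 2) else 0
      else 0 := by
  fin_cases b <;> fin_cases d <;> simp (disch := fun_prop) [gSix, pd_mul, pd_add] <;>
    fin_cases a <;> simp

theorem christoffel_gSix : christoffel gSix = christoffelSix := by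
  funext c a b u
  simp only [christoffel, inv_gSix, Fin.sum_univ_six]
  fin_cases c <;> simp [gSixInv] <;> simp only [pd_gSix] <;> fin_cases a <;> fin_cases b <;>
    simp [christoffelSix] <;> ring

theorem squareZeroAlong_christoffelSix : SquareZeroAlong {1, 3, 5} christoffelSix where
  eq_zero_of_notMem_upper c hc a b := by
    simp only [Set.mem_insert_iff, Set.mem_singleton_iff, not_or] at hc
    funext u
    simp [christoffelSix, hc]
  eq_zero_of_mem_left a ha c b := by
    rcases ha with rfl | rfl | rfl <;> funext u <;> simp [christoffelSix]
  eq_zero_of_mem_right b hb c a := by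
    rcases hb with rfl | rfl | rfl <;> funext u <;> simp [christoffelSix]
  pd_eq_zero m hm c a b := by
    funext p
    refine pd_eq_zero_of_update m fun q t => ?_
    rcases hm with rfl | rfl | rfl <;> simp [christoffelSix]

/-- `gSix` is not locally symmetric: the covariant derivative of its
curvature tensor satisfies `g((∇_{∂₁}R)(∂₁,∂₃)∂₅, ∂₁) = 1` at every point, hence `∇R ≠ 0`. -/
theorem stmt_12 :
    (∀ u : Fin 6 → ℝ,
      (∑ d, covR (christoffel gSix) 0 d 0 2 4 u * gSix u d 0) = 1) ∧
    ¬ (∀ (u : Fin 6 → ℝ) (h l i j k : Fin 6), covR (christoffel gSix) h l i j k u = 0) := by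
  have hcovR := squareZeroAlong_christoffelSix.covR_eq
  rw [christoffel_gSix]
  have hR3 (u : Fin 6 → ℝ) : covR christoffelSix 0 3 0 2 4 u = 1 := by
    rw [hcovR]
    unfold christoffelSix
    simp (disch := fun_prop) [pd_mul]
  have hR0 (u : Fin 6 → ℝ) : covR christoffelSix 0 0 0 2 4 u = 0 := by
    simp [hcovR, squareZeroAlong_christoffelSix.eq_zero_of_notMem_upper 0 (by simp)]
  have hsum (u : Fin 6 → ℝ) : ∑ d, covR christoffelSix 0 d 0 2 4 u * gSix u d 0 = 1 := by
    simp [Fin.sum_univ_six, gSix, hR0, hR3]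
  exact ⟨hsum, fun h => by simpa [h] using hsum 0⟩
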